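/- Let 2 < p < ∞. Then there does not exist a bounded linear operator T : L_p → ℓ_2 which is a sign embedding; that is, for every bounded linear T : L_p → ℓ_2 and every δ > 0 there exists a sign x ∈ L_p with ‖Tx‖ < δ‖x‖_p. -/

import Mathlib

open MeasureTheory Set Filter Topology
open scoped ENNReal NNReal

/-- Lebesgue measure on `[0,1]`. -/
noncomputable def μ01 : Measure ℝ := volume.restrict (Set.Icc 0 1)

/-- `x` is a sign: a.e. it takes values in `{-1, 0, 1}`. -/
def IsSign {p : ℝ≥0∞} (x : Lp ℝ p μ01) : Prop :=
  ∀ᵐ t ∂μ01, x t = 1 ∨ x t = -1 ∨ x t = 0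

/-!
Split `[0,1]` into `n` intervals of length `1/n`; their indicators `χᵢ` are signs of norm
`n^(-1/p)`. Every signed sum `∑ εᵢ χᵢ` is bounded by `1` a.e., hence has norm at most `1`,
while in a Hilbert space a suitable choice of signs gives `∑ ‖T χᵢ‖² ≤ ‖∑ εᵢ T χᵢ‖²`.
So `∑ ‖T χᵢ‖² ≤ ‖T‖²`, whereas `∑ (δ ‖χᵢ‖)² = δ² n^(1 - 2/p) → ∞` because `p > 2`:
some `χᵢ` has `‖T χᵢ‖ < δ ‖χᵢ‖`.
-/

section SignedSums

variable {ι E : Type*} [NormedAddCommGroup E] [InnerProductSpace ℝ E]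

lemma exists_sign_norm_sq_add_norm_sq_le (w v : E) :
    ∃ e : ℝ, |e| = 1 ∧ ‖w‖ ^ 2 + ‖v‖ ^ 2 ≤ ‖w + e • v‖ ^ 2 := by
  have hpar := parallelogram_law_with_norm ℝ w v
  by_cases h : ‖w‖ ^ 2 + ‖v‖ ^ 2 ≤ ‖w + v‖ ^ 2
  · exact ⟨1, by simp, by simpa using h⟩
  · refine ⟨-1, by simp, ?_⟩
    rw [neg_one_smul, ← sub_eq_add_neg]
    nlinarith

lemma exists_signs_sum_norm_sq_le (s : Finset ι) (v : ι → E) :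
    ∃ ε : ι → ℝ, (∀ i, |ε i| = 1) ∧
      ∑ i ∈ s, ‖v i‖ ^ 2 ≤ ‖∑ i ∈ s, ε i • v i‖ ^ 2 := by
  classical
  induction s using Finset.induction_on with
  | empty => exact ⟨1, by simp, by simp⟩
  | insert a s ha ih =>
    obtain ⟨ε, hε, hsum⟩ := ih
    obtain ⟨e, he, hstep⟩ :=
      exists_sign_norm_sq_add_norm_sq_le (∑ i ∈ s, ε i • v i) (v a)
    have hs : ∑ i ∈ s, Function.update ε a e i • v i = ∑ i ∈ s, ε i • v i :=
      Finset.sum_congr rfl fun i hi => by rw [Function.update_of_ne (ne_of_mem_of_not_mem hi ha)]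
    refine ⟨Function.update ε a e, fun i => ?_, ?_⟩
    · rcases eq_or_ne i a with rfl | hia
      · simpa using he
      · simpa [Function.update_of_ne hia] using hε i
    · rw [Finset.sum_insert ha, Finset.sum_insert ha, hs, Function.update_self,
        add_comm (e • v a)]
      linarith

lemma ContinuousLinearMap.sum_norm_apply_sq_le_of_forall_signs {F : Type*} [NormedAddCommGroup F]
    [NormedSpace ℝ F] (T : F →L[ℝ] E) (s : Finset ι) (u : ι → F) {M : ℝ}
    (hM : ∀ ε : ι → ℝ, (∀ i, |ε i| = 1) → ‖∑ i ∈ s, ε i • u i‖ ≤ M) :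
    ∑ i ∈ s, ‖T (u i)‖ ^ 2 ≤ (‖T‖ * M) ^ 2 := by
  obtain ⟨ε, hε, hsum⟩ := exists_signs_sum_norm_sq_le s (fun i => T (u i))
  have hT : ‖T (∑ i ∈ s, ε i • u i)‖ ≤ ‖T‖ * M :=
    (T.le_opNorm _).trans (mul_le_mul_of_nonneg_left (hM ε hε) (norm_nonneg T))
  calc ∑ i ∈ s, ‖T (u i)‖ ^ 2 ≤ ‖T (∑ i ∈ s, ε i • u i)‖ ^ 2 := by
        simpa [map_sum] using hsum
    _ ≤ (‖T‖ * M) ^ 2 := pow_le_pow_left₀ (norm_nonneg _) hT 2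

end SignedSums

section IndicatorSums

variable {ι α : Type*}

lemma abs_sum_mul_indicator_one_le_one {s : Finset ι} {A : ι → Set α}
    (hA : (s : Set ι).PairwiseDisjoint A) {c : ι → ℝ} (hc : ∀ i ∈ s, |c i| ≤ 1)
    (t : α) :
    |∑ i ∈ s, c i * (A i).indicator (fun _ => (1 : ℝ)) t| ≤ 1 :=
  calc |∑ i ∈ s, c i * (A i).indicator (fun _ => (1 : ℝ)) t|
      ≤ ∑ i ∈ s, (A i).indicator (fun _ => (1 : ℝ)) t := by
        refine (Finset.abs_sum_le_sum_abs _ _).trans (Finset.sum_le_sum fun i hi => ?_)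
        rw [abs_mul, abs_of_nonneg (indicator_nonneg (fun _ _ => zero_le_one) t)]
        exact mul_le_of_le_one_left (indicator_nonneg (fun _ _ => zero_le_one) t) (hc i hi)
    _ = (⋃ i ∈ s, A i).indicator (fun _ => (1 : ℝ)) t :=
        (Finset.indicator_biUnion_apply s A hA t).symm
    _ ≤ 1 := indicator_le_self' (fun _ _ => zero_le_one) t

lemma Lp.norm_sum_smul_indicatorConstLp_one_le [MeasurableSpace α] {μ : Measure α}
    [IsFiniteMeasure μ] {p : ℝ≥0∞} {s : Finset ι} {A : ι → Set α}
    (hA : ∀ i, MeasurableSet (A i)) (hdisj : (s : Set ι).PairwiseDisjoint A) {c : ι → ℝ}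
    (hc : ∀ i ∈ s, |c i| ≤ 1) :
    ‖∑ i ∈ s, c i • indicatorConstLp p (hA i) (measure_ne_top μ (A i)) (1 : ℝ)‖ ≤
      measureUnivNNReal μ ^ p.toReal⁻¹ := by
  have hcoe : ∀ᵐ t ∂μ, ∀ i ∈ s,
      (c i • indicatorConstLp p (hA i) (measure_ne_top μ (A i)) (1 : ℝ)) t =
        c i * (A i).indicator (fun _ => (1 : ℝ)) t := by
    refine (eventually_all_finset s).mpr fun i _ => ?_
    filter_upwards
      [Lp.coeFn_smul (c i) (indicatorConstLp p (hA i) (measure_ne_top μ (A i)) (1 : ℝ)),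
      indicatorConstLp_coeFn (p := p) (hs := hA i) (hμs := measure_ne_top μ (A i)) (c := (1 : ℝ))]
      with t hsmul hind
    rw [hsmul, Pi.smul_apply, hind, smul_eq_mul]
  have hbound : ∀ᵐ t ∂μ,
      ‖(∑ i ∈ s, c i • indicatorConstLp p (hA i) (measure_ne_top μ (A i)) (1 : ℝ)) t‖ ≤ 1 := by
    filter_upwards [Lp.coeFn_fun_finsetSum s fun i =>
      c i • indicatorConstLp p (hA i) (measure_ne_top μ (A i)) (1 : ℝ), hcoe] with t hsum hcoe
    rw [hsum, Finset.sum_congr rfl hcoe, Real.norm_eq_abs]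
    exact abs_sum_mul_indicator_one_le_one hdisj hc t
  simpa using Lp.norm_le_of_ae_bound zero_le_one hbound

end IndicatorSums

instance : IsProbabilityMeasure μ01 :=
  ⟨by rw [μ01, Measure.restrict_apply_univ, Real.volume_Icc, sub_zero, ENNReal.ofReal_one]⟩

def subinterval (n i : ℕ) : Set ℝ := Ico (i / n) ((i + 1 : ℕ) / n)

lemma measurableSet_subinterval (n i : ℕ) : MeasurableSet (subinterval n i) := measurableSet_Ico

open Function in
lemma pairwise_disjoint_subinterval (n : ℕ) : Pairwise (Disjoint on subinterval n) :=
  Monotone.pairwise_disjoint_on_Ico_succ fun _ _ hij => by gcongr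

lemma μ01_real_subinterval {n i : ℕ} (hi : i < n) :
    μ01.real (subinterval n i) = (n : ℝ)⁻¹ := by
  have hn : (0 : ℝ) < n := by exact_mod_cast (Nat.zero_le i).trans_lt hi
  have hsub : subinterval n i ⊆ Icc 0 1 := by
    refine Ico_subset_Icc_self.trans (Icc_subset_Icc (by positivity) ?_)
    rw [div_le_one hn]
    exact_mod_cast hi
  have hlen : ((i + 1 : ℕ) : ℝ) / n - i / n = (n : ℝ)⁻¹ := by
    push_cast
    field_simp
    ring
  rw [measureReal_def, μ01, Measure.restrict_apply (measurableSet_subinterval n i),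
    inter_eq_self_of_subset_left hsub, subinterval, Real.volume_Ico, hlen,
    ENNReal.toReal_ofReal (by positivity)]

lemma isSign_indicatorConstLp_one {p : ℝ≥0∞} {s : Set ℝ} (hs : MeasurableSet s)
    (hμs : μ01 s ≠ ∞) :
    IsSign (indicatorConstLp p hs hμs (1 : ℝ)) := by
  filter_upwards [indicatorConstLp_coeFn (p := p) (hs := hs) (hμs := hμs) (c := (1 : ℝ))]
    with t ht
  by_cases h : t ∈ s <;> simp [ht, h]

lemma tendsto_natCast_mul_inv_rpow_sq_atTop {q : ℝ} (hq : 2 < q) :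
    Tendsto (fun n : ℕ => (n : ℝ) * ((n : ℝ)⁻¹ ^ (1 / q)) ^ 2) atTop atTop := by
  have hq0 : 0 < q := by linarith
  have hexp : 0 < 1 - 2 / q := by rw [sub_pos, div_lt_one hq0]; exact hq
  refine ((tendsto_rpow_atTop hexp).comp tendsto_natCast_atTop_atTop).congr' ?_
  filter_upwards [eventually_gt_atTop 0] with n hn0
  have hn : (0 : ℝ) < n := Nat.cast_pos.mpr hn0
  rw [Function.comp_apply, Real.inv_rpow hn.le, inv_pow, ← Real.rpow_natCast,
    ← Real.rpow_mul hn.le, Real.rpow_sub hn, Real.rpow_one, div_eq_mul_inv, Nat.cast_ofNat,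
    one_div_mul_eq_div]

/-- If `2 < p < ∞`, no bounded linear operator `T : L_p[0,1] → ℓ₂` is a sign embedding:
for every such `T` and every `δ > 0` there is a sign `x ∈ L_p` with `‖T x‖ < δ ‖x‖`. -/
theorem no_sign_embedding_Lp_to_l2 (p : ℝ≥0∞) [Fact (1 ≤ p)] (hp2 : 2 < p) (hp : p ≠ ∞)
    (T : Lp ℝ p μ01 →L[ℝ] lp (fun _ : ℕ => ℝ) 2) (δ : ℝ) (hδ : 0 < δ) :
    ∃ x : Lp ℝ p μ01, IsSign x ∧ ‖T x‖ < δ * ‖x‖ := by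
  have hq : 2 < p.toReal := by
    simpa using (ENNReal.toReal_lt_toReal ENNReal.ofNat_ne_top hp).mpr hp2
  obtain ⟨n, hn⟩ := (((tendsto_natCast_mul_inv_rpow_sq_atTop hq).const_mul_atTop
    (pow_pos hδ 2)).eventually_gt_atTop (‖T‖ ^ 2)).exists
  let χ (i : ℕ) : Lp ℝ p μ01 :=
    indicatorConstLp p (measurableSet_subinterval n i) (measure_ne_top μ01 _) (1 : ℝ)
  have hnorm : ∀ i ∈ Finset.range n, ‖χ i‖ = (n : ℝ)⁻¹ ^ (1 / p.toReal) := fun i hi =>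
    (norm_indicatorConstLp (by positivity) hp).trans <| by
      rw [norm_one, one_mul, μ01_real_subinterval (Finset.mem_range.mp hi)]
  have hsum : ∑ i ∈ Finset.range n, ‖T (χ i)‖ ^ 2 ≤ ‖T‖ ^ 2 := by
    simpa [measureUnivNNReal] using
      T.sum_norm_apply_sq_le_of_forall_signs (Finset.range n) χ fun ε hε =>
        Lp.norm_sum_smul_indicatorConstLp_one_le (measurableSet_subinterval n)
          ((pairwise_disjoint_subinterval n).set_pairwise _) fun i _ => (hε i).le
  obtain ⟨i, -, hi⟩ : ∃ i ∈ Finset.range n, ‖T (χ i)‖ ^ 2 < (δ * ‖χ i‖) ^ 2 := by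
    refine Finset.exists_lt_of_sum_lt (hsum.trans_lt ?_)
    rw [Finset.sum_congr rfl fun i hi => by rw [hnorm i hi], Finset.sum_const, Finset.card_range,
      nsmul_eq_mul]
    linarith
  exact ⟨χ i, isSign_indicatorConstLp_one _ _, lt_of_pow_lt_pow_left₀ 2 (by positivity) hi⟩
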